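/- arXiv:1011.4016 — 3 statements merged into one kernel-verified Lean document; each statement's English description precedes it below -/
import Mathlib

section
/- A formula φ(x̄, ȳ) has the independence property with respect to a class C if and only if the opposite formula φ^opp(ȳ, x̄) (the same formula with the roles of the two variable tuples exchanged) has the independence property with respect to C. -/
/-!
Shattering is self-dual up to an exponential loss: if the `a_S` (one for each subset `S` of
`{0, …, n-1}`) are shattered by the `b_J`, then the parameters `b_{J_i}` with `J_i = {S | i ∈ S}`
are shattered by the `a_S`, since `r (a_S) (b_{J_i}) ↔ S ∈ J_i ↔ i ∈ S`.
-/

open FirstOrder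

def HasIndepProperty {ι : Type} {A B : ι → Type} (r : ∀ k, A k → B k → Prop) : Prop :=
  ∀ n : ℕ, ∃ (k : ι) (a : Fin n → A k) (b : Set (Fin n) → B k),
    ∀ (i : Fin n) (J : Set (Fin n)), r k (a i) (b J) ↔ i ∈ J

theorem HasIndepProperty.flip {ι : Type} {A B : ι → Type} {r : ∀ k, A k → B k → Prop}
    (h : HasIndepProperty r) : HasIndepProperty fun k => flip (r k) := by
  intro n
  obtain ⟨N, ⟨e⟩⟩ := Finite.exists_equiv_fin (Set (Fin n))
  obtain ⟨k, a, b, hab⟩ := h N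
  refine ⟨k, fun i => b {S | i ∈ e.symm S}, fun J => a (e J), fun i J => ?_⟩
  change r k (a (e J)) _ ↔ _
  rw [hab, Set.mem_ofPred_eq, Equiv.symm_apply_apply]

theorem hasIndepProperty_flip_iff {ι : Type} {A B : ι → Type} {r : ∀ k, A k → B k → Prop} :
    HasIndepProperty (fun k => flip (r k)) ↔ HasIndepProperty r :=
  ⟨HasIndepProperty.flip, HasIndepProperty.flip⟩

/-- A formula `φ(x̄, ȳ)` has the independence property with respect to a class of
structures iff the opposite formula `φ(ȳ, x̄)` (the same formula with the roles of
the two tuples of variables exchanged) has the independence property. -/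
theorem independence_property_opposite {L : Language} {ι : Type} (M : ι → Type)
    [∀ i, L.Structure (M i)] {p q : ℕ} (φ : L.Formula (Fin p ⊕ Fin q)) :
    (∀ n : ℕ, ∃ (k : ι) (a : Fin n → Fin p → M k) (b : Set (Fin n) → Fin q → M k),
        ∀ (i : Fin n) (J : Set (Fin n)), φ.Realize (Sum.elim (a i) (b J)) ↔ i ∈ J) ↔
    (∀ n : ℕ, ∃ (k : ι) (a : Fin n → Fin q → M k) (b : Set (Fin n) → Fin p → M k),
        ∀ (i : Fin n) (J : Set (Fin n)), φ.Realize (Sum.elim (b J) (a i)) ↔ i ∈ J) :=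
  hasIndepProperty_flip_iff (r := fun k (x : Fin p → M k) (y : Fin q → M k) =>
    φ.Realize (Sum.elim x y)) |>.symm
end

section
/- Let C be a subgraph-closed class of graphs that is not superflat, witnessed by r such that every K_m^r is a subgraph of a member of C. Then for every m, the bipartite incidence graph A_m — with vertices a_0,…,a_{m-1}, vertices b_J for each J ⊆ {0,…,m-1}, and a path of length r+1 from a_i to b_J whenever i ∈ J (paths internally disjoint) — is isomorphic to a member of C. -/
/-- Index type for the edges of the complete graph `K m`. -/
def EdgeIdx (m : ℕ) := {p : Fin m × Fin m // p.1 < p.2}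

/-- Auxiliary relation for the `r`-times subdivided `m`-clique. -/
def subCliqueRel (m r : ℕ) :
    (Fin m ⊕ EdgeIdx m × Fin r) → (Fin m ⊕ EdgeIdx m × Fin r) → Prop
  | Sum.inl _, Sum.inl _ => r = 0
  | Sum.inl i, Sum.inr (e, k) =>
      (k.val = 0 ∧ e.val.1 = i) ∨ (k.val = r - 1 ∧ e.val.2 = i)
  | Sum.inr (e, k), Sum.inr (e', k') => e = e' ∧ k'.val = k.val + 1
  | _, _ => False

/-- `K_m^r`: the complete graph on `m` vertices with each edge subdivided exactly `r` times. -/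
def subClique (m r : ℕ) : SimpleGraph (Fin m ⊕ EdgeIdx m × Fin r) :=
  SimpleGraph.fromRel (subCliqueRel m r)


/-- `H` occurs as a (not necessarily induced) subgraph of `G`, up to isomorphism. -/
def SubgraphOf {α β : Type*} (H : SimpleGraph α) (G : SimpleGraph β) : Prop :=
  ∃ f : H →g G, Function.Injective f

/-- A graph together with its vertex type. -/
abbrev SigmaGraph := Σ V : Type, SimpleGraph V

/-- Index type for the paths of the graph `A_m`: pairs `(i, J)` with `i ∈ J`. -/
def AIdx (m : ℕ) := {p : Fin m × Set (Fin m) // p.1 ∈ p.2}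

/-- Auxiliary relation for the graph `A_m` with subdivision parameter `r`:
vertices `a_i`, vertices `b_J` for `J ⊆ {0,…,m-1}`, and internally disjoint paths
of length `r+1` joining `a_i` to `b_J` exactly when `i ∈ J`. -/
def AgraphRel (m r : ℕ) :
    (Fin m ⊕ Set (Fin m) ⊕ AIdx m × Fin r) →
    (Fin m ⊕ Set (Fin m) ⊕ AIdx m × Fin r) → Prop
  | Sum.inl i, Sum.inr (Sum.inl J) => r = 0 ∧ i ∈ J
  | Sum.inl i, Sum.inr (Sum.inr (e, k)) => e.val.1 = i ∧ k.val = 0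
  | Sum.inr (Sum.inl J), Sum.inr (Sum.inr (e, k)) => e.val.2 = J ∧ k.val = r - 1
  | Sum.inr (Sum.inr (e, k)), Sum.inr (Sum.inr (e', k')) => e = e' ∧ k'.val = k.val + 1
  | _, _ => False

/-- The incidence graph `A_m` (with each incidence path of length `r+1`). -/
def Agraph (m r : ℕ) : SimpleGraph (Fin m ⊕ Set (Fin m) ⊕ AIdx m × Fin r) :=
  SimpleGraph.fromRel (AgraphRel m r)

/-!
`A_m` is a subgraph of `K_{m+2^m}^r`: send the `a_i` and the `b_J` injectively to branch vertices
of the clique, every `a_i` below every `b_J`, and route the path from `a_i` to `b_J` along the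
subdivided edge between their images. Subgraph-closure of `C` does the rest.
-/

theorem SubgraphOf.trans {α β γ : Type*} {H : SimpleGraph α} {G : SimpleGraph β}
    {K : SimpleGraph γ} (hHG : SubgraphOf H G) (hGK : SubgraphOf G K) : SubgraphOf H K :=
  let ⟨f, hf⟩ := hHG
  let ⟨g, hg⟩ := hGK
  ⟨g.comp f, hg.comp hf⟩

theorem subgraphOf_fromRel_of_injective {α β : Type*} {r : α → α → Prop} {s : β → β → Prop}
    (f : α → β) (hf : Function.Injective f) (hrs : ∀ a b, r a b → s (f a) (f b)) :
    SubgraphOf (SimpleGraph.fromRel r) (SimpleGraph.fromRel s) := by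
  refine ⟨⟨f, fun {a b} hab => ?_⟩, hf⟩
  rw [SimpleGraph.fromRel_adj] at hab ⊢
  exact ⟨hf.ne hab.1, hab.2.imp (hrs a b) (hrs b a)⟩

namespace Agraph

variable {m n : ℕ} (r : ℕ) (β : Fin m ⊕ Set (Fin m) ↪ Fin n)
  (hβ : ∀ i J, β (.inl i) < β (.inr J))

def pathEdge (e : AIdx m) : EdgeIdx n :=
  ⟨(β (.inl e.val.1), β (.inr e.val.2)), hβ _ _⟩

theorem pathEdge_injective : Function.Injective (pathEdge β hβ) := fun e e' h =>
  have hi : β (.inl e.val.1) = β (.inl e'.val.1) := congrArg (fun x : EdgeIdx n => x.val.1) h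
  have hJ : β (.inr e.val.2) = β (.inr e'.val.2) := congrArg (fun x : EdgeIdx n => x.val.2) h
  Subtype.ext (Prod.ext (Sum.inl_injective (β.injective hi)) (Sum.inr_injective (β.injective hJ)))

def toSubClique : Fin m ⊕ Set (Fin m) ⊕ AIdx m × Fin r → Fin n ⊕ EdgeIdx n × Fin r
  | .inl i => .inl (β (.inl i))
  | .inr (.inl J) => .inl (β (.inr J))
  | .inr (.inr (e, k)) => .inr (pathEdge β hβ e, k)

theorem toSubClique_injective : Function.Injective (toSubClique r β hβ) := by
  rintro (i | J | ⟨e, k⟩) (i' | J' | ⟨e', k'⟩) h <;>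
    simp only [toSubClique, Sum.inl.injEq, Sum.inr.injEq, Prod.mk.injEq, reduceCtorEq,
      β.injective.eq_iff] at h
  · rw [h]
  · rw [h]
  · rw [pathEdge_injective β hβ h.1, h.2]

theorem subCliqueRel_toSubClique {a b : Fin m ⊕ Set (Fin m) ⊕ AIdx m × Fin r}
    (h : AgraphRel m r a b) : subCliqueRel n r (toSubClique r β hβ a) (toSubClique r β hβ b) := by
  rcases a with i | J | ⟨e, k⟩ <;> rcases b with i' | J' | ⟨e', k'⟩ <;>
    simp only [AgraphRel] at h
  · exact h.1
  · exact .inl ⟨h.2, congrArg (β ∘ .inl) h.1⟩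
  · exact .inr ⟨h.2, congrArg (β ∘ .inr) h.1⟩
  · exact ⟨by rw [h.1], h.2⟩

end Agraph

theorem Agraph.subgraphOf_subClique_of_embedding {m n : ℕ} (r : ℕ)
    (β : Fin m ⊕ Set (Fin m) ↪ Fin n) (hβ : ∀ i J, β (.inl i) < β (.inr J)) :
    SubgraphOf (Agraph m r) (subClique n r) :=
  subgraphOf_fromRel_of_injective _ (toSubClique_injective r β hβ)
    fun _ _ => subCliqueRel_toSubClique r β hβ

theorem Agraph_subgraphOf_subClique (m r : ℕ) :
    SubgraphOf (Agraph m r) (subClique (m + 2 ^ m) r) := by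
  let σ : Set (Fin m) ≃ Fin (2 ^ m) := Fintype.equivFinOfCardEq (by simp [Fintype.card_set])
  refine Agraph.subgraphOf_subClique_of_embedding r
    ((Equiv.sumCongr (Equiv.refl (Fin m)) σ).trans finSumFinEquiv).toEmbedding fun i J => ?_
  simp only [Equiv.toEmbedding_apply, Equiv.trans_apply, Equiv.sumCongr_apply, Sum.map_inl,
    Sum.map_inr, finSumFinEquiv_apply_left, finSumFinEquiv_apply_right, Fin.lt_def,
    Fin.val_castAdd, Fin.val_natAdd]
  omega

/-- If `C` is subgraph-closed and, for some `r`, every subdivided clique `K_m^r`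
occurs as a subgraph of a member of `C`, then every incidence graph `A_m` is
isomorphic to a member of `C`. -/
theorem Agraph_mem_of_not_superflat (C : Set SigmaGraph) (r : ℕ)
    (hclosed : ∀ H G : SigmaGraph, G ∈ C → SubgraphOf H.2 G.2 → H ∈ C)
    (hr : ∀ m : ℕ, ∃ G ∈ C, SubgraphOf (subClique m r) G.2) :
    ∀ m : ℕ, ∃ G ∈ C, Nonempty (Agraph m r ≃g G.2) := by
  intro m
  obtain ⟨G, hG, hKG⟩ := hr (m + 2 ^ m)
  exact ⟨⟨_, Agraph m r⟩, hclosed _ G hG ((Agraph_subgraphOf_subClique m r).trans hKG),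
    ⟨.refl⟩⟩
end

section
/- Let C be a class of graphs and C' = {G' : G ∈ C} where G' subdivides each edge of G once and adds an apex t adjacent to all original vertices together with a triangle t, t₁, t₂. If C is superflat then C' is superflat. -/
/-- A graph together with its vertex type. -/
abbrev VGraph := Σ V : Type, SimpleGraph V

/-- For every `r` there is `m` such that `K_m^r` is not a subgraph of any member. -/
def Superflat (C : Set VGraph) : Prop :=
  ∀ r : ℕ, ∃ m : ℕ, ∀ G ∈ C, ¬ SubgraphOf (subClique m r) G.2

/-- Auxiliary relation for the graph `G'`: each edge `{a,b}` of `G` is subdivided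
once by a new vertex, and three new mutually adjacent vertices `t = 0`, `t₁ = 1`,
`t₂ = 2` are added, with `t` moreover adjacent to every original vertex of `G`. -/
def GprimeRel {α : Type} (G : SimpleGraph α) :
    (α ⊕ ({e : Sym2 α // e ∈ G.edgeSet} ⊕ Fin 3)) →
    (α ⊕ ({e : Sym2 α // e ∈ G.edgeSet} ⊕ Fin 3)) → Prop
  | Sum.inl a, Sum.inr (Sum.inl e) => a ∈ e.val
  | Sum.inl _, Sum.inr (Sum.inr t) => t = 0
  | Sum.inr (Sum.inr _), Sum.inr (Sum.inr _) => True
  | _, _ => False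

/-- The graph `G'` obtained from `G` by the diameter-reduction construction. -/
def Gprime {α : Type} (G : SimpleGraph α) :
    SimpleGraph (α ⊕ ({e : Sym2 α // e ∈ G.edgeSet} ⊕ Fin 3)) :=
  SimpleGraph.fromRel (GprimeRel G)

/-- `v` lies on a 3-cycle of the graph `H`. -/
def InTriangle {V : Type*} (H : SimpleGraph V) (v : V) : Prop :=
  ∃ u w, H.Adj v u ∧ H.Adj v w ∧ H.Adj u w

/-!
Let `f : K_m^r → G'` be injective with `m = M + 5`. A branch vertex `i` owns itself and the
subdivision vertices on the edges `(i, j)` with `i < j`. Only three vertices of `K_m^r` are mapped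
onto the triangle `t t₁ t₂`, so at least `M + 2` branch vertices own none of them. Away from the
triangle, `G'` is bipartite between original and subdivision vertices, and a subdivision vertex has
only two neighbours; hence these branch vertices are mapped to original vertices, and the paths
leaving them alternate between the two sides. So `r = 2s + 1` is odd, and since two original
vertices with a common subdivision neighbour are adjacent in `G`, keeping every second vertex of
each path embeds `K_M^s` into `G`.
-/

open Function

section Gprime

variable {α : Type} {G : SimpleGraph α}

def triangleVerts {α E : Type} : Finset (α ⊕ (E ⊕ Fin 3)) :=
  Finset.univ.map (Embedding.inr.trans Embedding.inr)

@[simp]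
lemma card_triangleVerts {α E : Type} :
    (triangleVerts : Finset (α ⊕ (E ⊕ Fin 3))).card = 3 := by
  simp [triangleVerts]

@[simp]
lemma Gprime_adj_inl_inr_inl {a : α} {ε : {e : Sym2 α // e ∈ G.edgeSet}} :
    (Gprime G).Adj (.inl a) (.inr (.inl ε)) ↔ a ∈ ε.val := by
  simp [Gprime, GprimeRel]

lemma Gprime.not_isLeft_of_adj {u v} (h : (Gprime G).Adj u v) (hu : u.isLeft) : ¬v.isLeft := by
  rcases u with a | _ <;> rcases v with b | _ <;> simp_all [Gprime, GprimeRel]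

lemma Gprime.isLeft_of_adj {u v} (h : (Gprime G).Adj u v) (hu : ¬u.isLeft)
    (hT : u ∉ triangleVerts) : v.isLeft := by
  rcases u with a | e | t <;> rcases v with b | e' | t' <;>
    simp_all [Gprime, GprimeRel, triangleVerts]

lemma Gprime.exists_eq_inl_of_adj_inr_inl {ε v} (h : (Gprime G).Adj (.inr (.inl ε)) v) :
    ∃ b ∈ ε.val, v = .inl b := by
  rcases v with b | _ | _ <;> simp_all [Gprime, GprimeRel]

lemma Gprime.isLeft_of_adj_of_adj_of_adj {u v₁ v₂ v₃} (hT : u ∉ triangleVerts)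
    (h₁ : (Gprime G).Adj u v₁) (h₂ : (Gprime G).Adj u v₂) (h₃ : (Gprime G).Adj u v₃)
    (h₁₂ : v₁ ≠ v₂) (h₁₃ : v₁ ≠ v₃) (h₂₃ : v₂ ≠ v₃) : u.isLeft := by
  rcases u with a | ε | t
  · rfl
  · obtain ⟨b₁, hb₁, rfl⟩ := Gprime.exists_eq_inl_of_adj_inr_inl h₁
    obtain ⟨b₂, hb₂, rfl⟩ := Gprime.exists_eq_inl_of_adj_inr_inl h₂
    obtain ⟨b₃, hb₃, rfl⟩ := Gprime.exists_eq_inl_of_adj_inr_inl h₃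
    simp only [ne_eq, Sum.inl.injEq] at h₁₂ h₁₃ h₂₃
    rw [Sym2.eq_of_ne_mem h₁₂ hb₁ hb₂ (Sym2.mem_mk_left _ _) (Sym2.mem_mk_right _ _),
      Sym2.mem_iff] at hb₃
    tauto
  · simp [triangleVerts] at hT

lemma Gprime.adj_of_adj_of_adj {a b : α} {w} (ha : (Gprime G).Adj (.inl a) w)
    (hb : (Gprime G).Adj (.inl b) w) (hw : ¬w.isLeft) (hT : w ∉ triangleVerts) (hab : a ≠ b) :
    G.Adj a b := by
  rcases w with c | ⟨ε, hε⟩ | t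
  · simp at hw
  · simp only [Gprime_adj_inl_inr_inl] at ha hb
    rwa [Sym2.eq_of_ne_mem hab ha hb (Sym2.mem_mk_left a b) (Sym2.mem_mk_right a b)] at hε
  · simp [triangleVerts] at hT

end Gprime

instance (m : ℕ) : Fintype (EdgeIdx m) := by
  unfold EdgeIdx; infer_instance

def EdgeIdx.map {M m : ℕ} (g : Fin M ↪o Fin m) (E : EdgeIdx M) : EdgeIdx m :=
  ⟨(g E.val.1, g E.val.2), g.strictMono E.property⟩

lemma EdgeIdx.map_injective {M m : ℕ} (g : Fin M ↪o Fin m) : Injective (EdgeIdx.map g) := by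
  intro E E' h
  have h' := congrArg Subtype.val h
  simp only [EdgeIdx.map, Prod.mk.injEq, g.injective.eq_iff] at h'
  exact Subtype.ext (Prod.ext h'.1 h'.2)

namespace subClique

variable {m r : ℕ}

lemma adj_inl_inl {i j : Fin m} : (subClique m r).Adj (.inl i) (.inl j) ↔ r = 0 ∧ i ≠ j := by
  simp [subClique, subCliqueRel, and_comm]

lemma adj_inl_inr {i : Fin m} {e : EdgeIdx m} {k : Fin r} :
    (subClique m r).Adj (.inl i) (.inr (e, k)) ↔
      (k.val = 0 ∧ e.val.1 = i) ∨ (k.val = r - 1 ∧ e.val.2 = i) := by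
  simp [subClique, subCliqueRel]

lemma adj_inr_inr {e e' : EdgeIdx m} {k k' : Fin r} :
    (subClique m r).Adj (.inr (e, k)) (.inr (e', k')) ↔
      e = e' ∧ (k'.val = k.val + 1 ∨ k.val = k'.val + 1) := by
  simp only [subClique, SimpleGraph.fromRel_adj, subCliqueRel, ne_eq, Sum.inr.injEq,
    Prod.mk.injEq, Fin.ext_iff]
  grind

def stepToward (r : ℕ) (i j : Fin m) (h : j ≠ i) : Fin m ⊕ EdgeIdx m × Fin r :=
  if hr : r = 0 then .inl j
  else if hij : i < j then .inr (⟨(i, j), hij⟩, ⟨0, by omega⟩)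
  else .inr (⟨(j, i), h.lt_or_gt.resolve_right hij⟩, ⟨r - 1, by omega⟩)

lemma adj_stepToward {i j : Fin m} (h : j ≠ i) :
    (subClique m r).Adj (.inl i) (stepToward r i j h) := by
  unfold stepToward
  split_ifs with hr hij
  · exact adj_inl_inl.2 ⟨hr, h.symm⟩
  · exact adj_inl_inr.2 (.inl ⟨rfl, rfl⟩)
  · exact adj_inl_inr.2 (.inr ⟨rfl, rfl⟩)

lemma stepToward_ne {i j j' : Fin m} (h : j ≠ i) (h' : j' ≠ i) (hjj' : j ≠ j') :
    stepToward r i j h ≠ stepToward r i j' h' := by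
  unfold stepToward
  split_ifs <;> simp_all [EdgeIdx, Subtype.ext_iff, Prod.ext_iff]

def branchOf : Fin m ⊕ EdgeIdx m × Fin r → Fin m :=
  Sum.elim id fun p => p.1.val.1

lemma exists_orderEmbedding_avoiding {M : ℕ} {Y : Type*}
    {f : Fin m ⊕ EdgeIdx m × Fin r → Y} (hf : Injective f) (S : Finset Y)
    (h : M + S.card ≤ m) : ∃ g : Fin M ↪o Fin m, ∀ i w, branchOf w = g i → f w ∉ S := by
  classical
  set B := (Finset.univ.filter fun w => f w ∈ S).image branchOf
  have hB : B.card ≤ S.card := Finset.card_image_le.trans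
    (Finset.card_le_card_of_injOn f (fun w hw => (Finset.mem_filter.1 hw).2) hf.injOn)
  have hM : M ≤ Bᶜ.card := by
    rw [Finset.card_compl, Fintype.card_fin]
    omega
  refine ⟨Bᶜ.orderEmbOfCardLe hM, fun i w hw hwS => ?_⟩
  have hi := Finset.orderEmbOfCardLe_mem _ hM i
  rw [← hw, Finset.mem_compl] at hi
  exact hi (Finset.mem_image_of_mem _ (by simp [hwS]))

def doubling {M : ℕ} (s : ℕ) (g : Fin M ↪o Fin m) :
    Fin M ⊕ EdgeIdx M × Fin s → Fin m ⊕ EdgeIdx m × Fin (2 * s + 1)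
  | .inl i => .inl (g i)
  | .inr (E, κ) => .inr (E.map g, ⟨2 * κ + 1, by omega⟩)

lemma doubling_injective {M s : ℕ} (g : Fin M ↪o Fin m) : Injective (doubling s g) := by
  rintro (i | ⟨E, κ⟩) (j | ⟨E', κ'⟩) h <;>
    simp only [doubling, Sum.inl.injEq, Sum.inr.injEq, reduceCtorEq, Prod.mk.injEq,
      Fin.ext_iff] at h
  · rw [g.injective (Fin.ext h)]
  · obtain ⟨hE, hκ⟩ := h
    rw [EdgeIdx.map_injective g hE, Fin.ext (by omega : κ.val = κ'.val)]

lemma exists_even_adj_doubling {M s : ℕ} (g : Fin M ↪o Fin m)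
    {x y : Fin M ⊕ EdgeIdx M × Fin s} (h : (subClique M s).Adj x y) :
    ∃ (E : EdgeIdx M) (k : Fin (2 * s + 1)), Even k.val ∧
      (subClique m (2 * s + 1)).Adj (doubling s g x) (.inr (E.map g, k)) ∧
      (subClique m (2 * s + 1)).Adj (doubling s g y) (.inr (E.map g, k)) := by
  wlog hxy : subCliqueRel M s x y generalizing x y
  · obtain ⟨E, k, hk, hx, hy⟩ := this h.symm (h.2.resolve_left hxy)
    exact ⟨E, k, hk, hy, hx⟩
  rcases x with i | ⟨E, κ⟩ <;> rcases y with j | ⟨E', κ'⟩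
  · obtain rfl : s = 0 := hxy
    have hij : i ≠ j := fun hij => h.ne (congrArg _ hij)
    rcases hij.lt_or_gt with hlt | hlt
    · exact ⟨⟨(i, j), hlt⟩, 0, Even.zero, adj_inl_inr.2 (.inl ⟨rfl, rfl⟩),
        adj_inl_inr.2 (.inr ⟨rfl, rfl⟩)⟩
    · exact ⟨⟨(j, i), hlt⟩, 0, Even.zero, adj_inl_inr.2 (.inr ⟨rfl, rfl⟩),
        adj_inl_inr.2 (.inl ⟨rfl, rfl⟩)⟩
  · have hκ' := κ'.isLt
    rcases hxy with ⟨hκ, rfl⟩ | ⟨hκ, rfl⟩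
    · exact ⟨E', ⟨0, by omega⟩, Even.zero, adj_inl_inr.2 (.inl ⟨rfl, rfl⟩),
        adj_inr_inr.2 ⟨rfl, .inr (by simp [hκ])⟩⟩
    · exact ⟨E', ⟨2 * s, by omega⟩, even_two_mul s, adj_inl_inr.2 (.inr ⟨by simp, rfl⟩),
        adj_inr_inr.2 ⟨rfl, .inl (by simp; omega)⟩⟩
  · exact hxy.elim
  · obtain ⟨rfl, hκ⟩ := hxy
    have hκ' := κ'.isLt
    exact ⟨E, ⟨2 * κ + 2, by omega⟩, ⟨κ + 1, by ring⟩,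
      adj_inr_inr.2 ⟨rfl, .inl rfl⟩, adj_inr_inr.2 ⟨rfl, .inr (by simp; omega)⟩⟩

end subClique

section Embedding

open subClique

variable {α : Type} {G : SimpleGraph α} {m r : ℕ}

lemma isLeft_apply_inl (hm : 4 ≤ m) (f : subClique m r →g Gprime G) (hf : Injective f)
    {i : Fin m} (hT : f (.inl i) ∉ triangleVerts) : (f (.inl i)).isLeft := by
  have h3 : 2 < (Finset.univ.erase i).card := by
    rw [Finset.card_erase_of_mem (Finset.mem_univ i), Finset.card_fin]
    omega
  obtain ⟨j₁, h₁, j₂, h₂, j₃, h₃, h₁₂, h₁₃, h₂₃⟩ := Finset.two_lt_card.1 h3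
  rw [Finset.mem_erase] at h₁ h₂ h₃
  exact Gprime.isLeft_of_adj_of_adj_of_adj hT (f.map_adj (adj_stepToward h₁.1))
    (f.map_adj (adj_stepToward h₂.1)) (f.map_adj (adj_stepToward h₃.1))
    (hf.ne (stepToward_ne _ _ h₁₂)) (hf.ne (stepToward_ne _ _ h₁₃))
    (hf.ne (stepToward_ne _ _ h₂₃))

lemma isLeft_apply_inr_iff (f : subClique m r →g Gprime G) {e : EdgeIdx m}
    (he : (f (.inl e.val.1)).isLeft) (hT : ∀ k, f (.inr (e, k)) ∉ triangleVerts) (k : Fin r) :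
    (f (.inr (e, k))).isLeft ↔ Odd k.val := by
  obtain ⟨n, hn⟩ := k
  induction n with
  | zero =>
    simpa using Gprime.not_isLeft_of_adj (f.map_adj (adj_inl_inr.2 (.inl ⟨rfl, rfl⟩))) he
  | succ n ih =>
    have hadj := f.map_adj (adj_inr_inr.2 ⟨rfl, .inl rfl⟩ :
      (subClique m r).Adj (.inr (e, ⟨n, by omega⟩)) (.inr (e, ⟨n + 1, hn⟩)))
    rw [Nat.odd_add_one, ← ih (by omega)]
    exact ⟨fun h hn' => Gprime.not_isLeft_of_adj hadj hn' h,
      fun h => Gprime.isLeft_of_adj hadj h (hT _)⟩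

lemma odd_of_isLeft (f : subClique m r →g Gprime G) {e : EdgeIdx m}
    (h₁ : (f (.inl e.val.1)).isLeft) (h₂ : (f (.inl e.val.2)).isLeft)
    (hT : ∀ k, f (.inr (e, k)) ∉ triangleVerts) : Odd r := by
  rcases Nat.eq_zero_or_pos r with rfl | hr
  · exact absurd h₂
      (Gprime.not_isLeft_of_adj (f.map_adj (adj_inl_inl.2 ⟨rfl, e.property.ne⟩)) h₁)
  · have hlast := Gprime.not_isLeft_of_adj (f.map_adj (adj_inl_inr.2 (.inr ⟨rfl, rfl⟩) :
      (subClique m r).Adj (.inl e.val.2) (.inr (e, ⟨r - 1, by omega⟩)))) h₂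
    rw [isLeft_apply_inr_iff f h₁ hT, Nat.not_odd_iff_even] at hlast
    obtain ⟨s, hs⟩ := hlast
    exact ⟨s, by simp only at hs; omega⟩

theorem subgraphOf_of_odd {M s : ℕ} (f : subClique m (2 * s + 1) →g Gprime G)
    (hf : Injective f) (g : Fin M ↪o Fin m) (hbranch : ∀ i, (f (.inl (g i))).isLeft)
    (hT : ∀ (E : EdgeIdx M) k, f (.inr (E.map g, k)) ∉ triangleVerts) :
    SubgraphOf (subClique M s) G := by
  have hpath (E : EdgeIdx M) k : (f (.inr (E.map g, k))).isLeft ↔ Odd k.val :=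
    isLeft_apply_inr_iff f (hbranch E.val.1) (hT E) k
  have hleft : ∀ x, ∃ a, f (doubling s g x) = .inl a := by
    rintro (i | ⟨E, κ⟩)
    · exact Sum.isLeft_iff.1 (hbranch i)
    · exact Sum.isLeft_iff.1 ((hpath E _).2 (odd_two_mul_add_one κ.val))
  choose F hF using hleft
  have hFinj : Injective F := fun x y h => doubling_injective g (hf (by rw [hF, hF, h]))
  refine ⟨⟨F, fun {x y} hxy => ?_⟩, hFinj⟩
  obtain ⟨E, k, hk, hx, hy⟩ := exists_even_adj_doubling g hxy
  have hx' := f.map_adj hx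
  have hy' := f.map_adj hy
  rw [hF] at hx' hy'
  exact Gprime.adj_of_adj_of_adj hx' hy' (by rw [hpath]; exact Nat.not_odd_iff_even.2 hk)
    (hT E k) (hFinj.ne hxy.ne)

end Embedding

/-- If `C` is superflat, then so is the class `C' = {G' : G ∈ C}` obtained by the
diameter-reduction construction. -/
theorem superflat_Gprime (C : Set VGraph) (hC : Superflat C) :
    Superflat {H : VGraph | ∃ G ∈ C, Nonempty (H.2 ≃g Gprime G.2)} := by
  intro r
  obtain ⟨M, hM⟩ := hC (r / 2)
  refine ⟨M + 5, ?_⟩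
  rintro H ⟨G, hG, ⟨φ⟩⟩ ⟨f₀, hf₀⟩
  set f := φ.toHom.comp f₀
  have hf : Injective f := φ.injective.comp hf₀
  obtain ⟨g, hg⟩ :=
    subClique.exists_orderEmbedding_avoiding (M := M + 2) hf triangleVerts (by simp)
  have hbranch i : (f (.inl (g i))).isLeft := isLeft_apply_inl (by omega) f hf (hg i _ rfl)
  have hT (E : EdgeIdx (M + 2)) k : f (.inr (E.map g, k)) ∉ triangleVerts := hg E.val.1 _ rfl
  obtain ⟨s, rfl⟩ : Odd r := odd_of_isLeft f (e := EdgeIdx.map g ⟨(0, 1), Fin.zero_lt_one⟩)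
    (hbranch 0) (hbranch 1) (hT _)
  rw [show (2 * s + 1) / 2 = s by omega] at hM
  exact hM G hG (subgraphOf_of_odd f hf ((Fin.castLEOrderEmb (by omega)).trans g)
    (fun i => hbranch _) (fun E => hT (E.map _)))
end
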